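/- Let X be a quasi-median graph of cubical dimension dim_□(X) (the maximal cardinality of a family of pairwise transverse hyperplanes), and let x, y be vertices. If N is the maximal number of pairwise non-transverse hyperplanes separating x and y, then d(x,y) ≤ dim_□(X) · N. -/

import Mathlib

open SimpleGraph

/-- The triangle condition of quasi-median graphs. -/
def QMTriangle {V : Type*} (G : SimpleGraph V) : Prop :=
  ∀ a x y : V, G.Adj x y → G.dist a x = G.dist a y →
    ∃ z : V, G.Adj x z ∧ G.Adj y z ∧ G.dist a z + 1 = G.dist a x

/-- The quadrangle condition of quasi-median graphs. -/
def QMQuad {V : Type*} (G : SimpleGraph V) : Prop :=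
  ∀ a x y z : V, G.Adj x z → G.Adj y z → x ≠ y → G.dist a x = G.dist a y →
    G.dist a z = G.dist a x + 1 →
    ∃ w : V, G.Adj x w ∧ G.Adj y w ∧ G.dist a w + 2 = G.dist a z

/-- `G` has no induced `K₄⁻` (complete graph on four vertices minus an edge). -/
def NoK4minus {V : Type*} (G : SimpleGraph V) : Prop :=
  ¬ ∃ a b c d : V, a ≠ b ∧ a ≠ c ∧ a ≠ d ∧ b ≠ c ∧ b ≠ d ∧ c ≠ d ∧
    G.Adj a b ∧ G.Adj a c ∧ G.Adj a d ∧ G.Adj b c ∧ G.Adj b d ∧ ¬ G.Adj c d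

/-- `G` has no induced complete bipartite graph `K_{3,2}`. -/
def NoK32 {V : Type*} (G : SimpleGraph V) : Prop :=
  ¬ ∃ x1 x2 x3 y1 y2 : V, x1 ≠ x2 ∧ x1 ≠ x3 ∧ x2 ≠ x3 ∧ y1 ≠ y2 ∧
    G.Adj x1 y1 ∧ G.Adj x1 y2 ∧ G.Adj x2 y1 ∧ G.Adj x2 y2 ∧ G.Adj x3 y1 ∧ G.Adj x3 y2 ∧
    ¬ G.Adj x1 x2 ∧ ¬ G.Adj x1 x3 ∧ ¬ G.Adj x2 x3 ∧ ¬ G.Adj y1 y2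

/-- A quasi-median graph: connected, with no induced `K₄⁻` nor `K_{3,2}`, satisfying
the triangle and quadrangle conditions. -/
def QuasiMedian {V : Type*} (G : SimpleGraph V) : Prop :=
  G.Connected ∧ NoK4minus G ∧ NoK32 G ∧ QMTriangle G ∧ QMQuad G

/-- One step of the relation generating hyperplanes: two edges of a common
triangle, or two opposite edges of a square. -/
def hypStep {V : Type*} (G : SimpleGraph V) (e e' : Sym2 V) : Prop :=
  (∃ a b c : V, G.Adj a b ∧ G.Adj b c ∧ G.Adj a c ∧
      e ∈ ({s(a, b), s(b, c), s(a, c)} : Set (Sym2 V)) ∧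
      e' ∈ ({s(a, b), s(b, c), s(a, c)} : Set (Sym2 V))) ∨
  (∃ a b c d : V, G.Adj a b ∧ G.Adj b c ∧ G.Adj c d ∧ G.Adj d a ∧ a ≠ c ∧ b ≠ d ∧
      e = s(a, b) ∧ e' = s(d, c))

/-- The hyperplane (equivalence class of edges) of an edge `e`. -/
def hypClass {V : Type*} (G : SimpleGraph V) (e : Sym2 V) : Set (Sym2 V) :=
  {e' | Relation.ReflTransGen (hypStep G) e e'}

/-- `J` is a hyperplane of `G`. -/
def IsHyperplane {V : Type*} (G : SimpleGraph V) (J : Set (Sym2 V)) : Prop :=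
  ∃ e ∈ G.edgeSet, J = hypClass G e

/-- The vertices of the carrier of a hyperplane: endpoints of its edges. -/
def hypVerts {V : Type*} (J : Set (Sym2 V)) : Set V := {v | ∃ e ∈ J, v ∈ e}

/-- Two distinct hyperplanes are transverse if the second contains an edge both of
whose endpoints lie in the carrier of the first. -/
def Transverse {V : Type*} (G : SimpleGraph V) (J1 J2 : Set (Sym2 V)) : Prop :=
  J1 ≠ J2 ∧ ∃ u v : V, G.Adj u v ∧ s(u, v) ∈ J2 ∧ u ∈ hypVerts J1 ∧ v ∈ hypVerts J1

/-- The hyperplane `J` separates `x` from `y`: every walk from `x` to `y` crosses an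
edge of `J`. -/
def Separates {V : Type*} (G : SimpleGraph V) (J : Set (Sym2 V)) (x y : V) : Prop :=
  ∀ w : G.Walk x y, ∃ e ∈ w.edges, e ∈ J

/-!
Fix a geodesic `x = p₀, p₁, …, p_d = y`. In a quasi-median graph every vertex `w` has a gate
in the clique spanned by an edge `u v` (the unique vertex of the clique nearest to `w`), and
an edge lies in the hyperplane of `u v` exactly when its endpoints have different gates; this
comes from the triangle and quadrangle conditions through a Djoković–Winkler type argument.
Hence the hyperplanes `J₀, …, J_{d-1}` of the edges of the geodesic are pairwise distinct and
all separate `x` from `y`. Transversality of hyperplanes is symmetric, and non-transversality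
is transitive along the geodesic, because the gate for `J_j` is constant on the carrier of
every hyperplane not transverse to `J_j`. So "`i < j` and `J_i`, `J_j` are not transverse" is
a strict order on the edges of the geodesic, whose chains have at most `N` elements and whose
antichains at most `dim_□ X` elements; Mirsky's theorem (the dual of Dilworth's) bounds `d` by
the product.
-/

namespace Finset

theorem card_le_mul_of_isChain_of_isAntichain {α : Type*} {r : α → α → Prop}
    [IsStrictOrder α r] {s : Finset α} {D N : ℕ}
    (hchain : ∀ t ⊆ s, IsChain r (t : Set α) → #t ≤ N)
    (hanti : ∀ t ⊆ s, IsAntichain r (t : Set α) → #t ≤ D) : #s ≤ D * N := by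
  classical
  -- induction on `N`: the `r`-maximal elements `M` of `s` form an antichain, and every chain of
  -- `s \ M` extends by an element above it
  induction N generalizing s with
  | zero =>
    rw [mul_zero, Nat.le_zero, card_eq_zero, eq_empty_iff_forall_notMem]
    intro a ha
    simpa using hchain {a} (by simpa) (by simp)
  | succ N ih =>
    let M := {a ∈ s | ∀ b ∈ s, ¬ r a b}
    have hM : #M ≤ D := hanti M (filter_subset _ _) fun a ha b hb _ =>
      (mem_filter.1 ha).2 b (mem_filter.1 hb).1
    have hrest : #(s \ M) ≤ D * N := by
      refine ih (fun t hts ht => ?_) fun t hts => hanti t (hts.trans sdiff_subset)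
      obtain rfl | htne := t.eq_empty_or_nonempty
      · simp
      let := partialOrderOfSO r
      obtain ⟨m, hmt, hmax⟩ := t.exists_maximal htne
      have hm_top : ∀ x ∈ t, x = m ∨ r x m := fun x hx => by
        by_cases hxm : x = m
        · exact .inl hxm
        rcases ht hx hmt hxm with h | h
        · exact .inr h
        · exact hmax hx (.inr h)
      obtain ⟨b, hbs, hmb⟩ : ∃ b ∈ s, r m b := by
        have hm := mem_sdiff.1 (hts hmt)
        simpa [M, hm.1] using hm.2
      have hxb : ∀ x ∈ t, r x b := fun x hx =>
        (hm_top x hx).elim (· ▸ hmb) (_root_.trans · hmb)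
      have hbt : b ∉ t := fun hb => irrefl b (hxb b hb)
      have := hchain (insert b t) (insert_subset hbs (hts.trans sdiff_subset))
        (by push_cast; exact ht.insert fun x hx _ => .inr (hxb x hx))
      rwa [card_insert_of_notMem hbt, Nat.add_le_add_iff_right] at this
    calc #s ≤ #(s \ M) + #M := card_le_card_sdiff_add_card
      _ ≤ D * (N + 1) := by rw [Nat.mul_succ]; omega

end Finset

namespace SimpleGraph

variable {V : Type*} {G : SimpleGraph V}

lemma Adj.dist_le_add_one {v w : V} (h : G.Adj v w) (u : V) : G.dist u w ≤ G.dist u v + 1 := by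
  rcases h.diff_dist_adj (u := u) with h | h | h <;> omega

lemma Adj.dist_le_add_one' {v w : V} (h : G.Adj v w) (u : V) : G.dist w u ≤ G.dist v u + 1 := by
  rw [dist_comm, dist_comm (u := v)]
  exact h.dist_le_add_one u

lemma Connected.exists_adj_dist_add_one_eq (hconn : G.Connected) {u a : V}
    (h : 0 < G.dist u a) : ∃ a', G.Adj a a' ∧ G.dist u a' + 1 = G.dist u a := by
  obtain ⟨p, hp⟩ := hconn.exists_walk_length_eq_dist a u
  cases p with
  | nil => simp at h
  | @cons _ b _ hab q =>
    refine ⟨b, hab, le_antisymm ?_ (hab.symm.dist_le_add_one u)⟩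
    have := dist_le q
    rw [Walk.length_cons] at hp
    rw [dist_comm (u := u), dist_comm (u := u)]
    omega

/-- The maximal clique through the edge `u v` (when `G` is quasi-median). -/
def edgeClique (G : SimpleGraph V) (u v : V) : Set V :=
  {c | c = u ∨ c = v ∨ (G.Adj u c ∧ G.Adj v c)}

lemma left_mem_edgeClique (u v : V) : u ∈ G.edgeClique u v := .inl rfl

lemma right_mem_edgeClique (u v : V) : v ∈ G.edgeClique u v := .inr (.inl rfl)

def IsGate (G : SimpleGraph V) (u v w c : V) : Prop :=
  c ∈ G.edgeClique u v ∧ ∀ c' ∈ G.edgeClique u v, c' ≠ c → G.dist c' w = G.dist c w + 1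

open Classical in
/-- The gate of `w` in `G.edgeClique u v`; the junk value `w` is not taken when `u v` is an edge
of a quasi-median graph (`QuasiMedian.exists_isGate`). -/
noncomputable def gate (G : SimpleGraph V) (u v w : V) : V :=
  if h : ∃ c, G.IsGate u v w c then h.choose else w

lemma Walk.dist_getVert_getVert {x y : V} {w : G.Walk x y} (hw : w.length = G.dist x y)
    {i j : ℕ} (hij : i ≤ j) (hj : j ≤ w.length) :
    G.dist (w.getVert i) (w.getVert j) = j - i := by
  have h := length_eq_dist_of_subwalk hw
    (((w.take j).isSubwalk_drop i).trans (w.isSubwalk_take j))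
  rwa [Walk.drop_length, Walk.take_length, Walk.take_getVert, min_eq_left hj,
    min_eq_right hij, eq_comm] at h

end SimpleGraph

section Hyperplanes

variable {V : Type*} {G : SimpleGraph V}

lemma hypStep.symm {e e' : Sym2 V} (h : hypStep G e e') : hypStep G e' e := by
  rcases h with ⟨a, b, c, hab, hbc, hac, he, he'⟩ |
    ⟨a, b, c, d, hab, hbc, hcd, hda, hac, hbd, rfl, rfl⟩
  · exact .inl ⟨a, b, c, hab, hbc, hac, he', he⟩
  · exact .inr ⟨d, c, b, a, hcd.symm, hbc.symm, hab.symm, hda.symm, hbd.symm, hac.symm,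
      rfl, rfl⟩

lemma mem_hypClass_self (e : Sym2 V) : e ∈ hypClass G e := .refl

lemma mem_hypClass_of_hypStep {e f f' : Sym2 V} (hf : f ∈ hypClass G e)
    (h : hypStep G f f') : f' ∈ hypClass G e :=
  .tail hf h

lemma hypClass_eq_of_mem {e f : Sym2 V} (h : f ∈ hypClass G e) :
    hypClass G f = hypClass G e := by
  have hrev : e ∈ hypClass G f := by
    induction h with
    | refl => exact .refl
    | tail _ hs ih => exact .head hs.symm ih
  exact Set.ext fun _ => ⟨h.trans, hrev.trans⟩

lemma hypClass_eq_of_mem_of_mem {e e' f : Sym2 V} (h : f ∈ hypClass G e)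
    (h' : f ∈ hypClass G e') : hypClass G e = hypClass G e' :=
  (hypClass_eq_of_mem h).symm.trans (hypClass_eq_of_mem h')

end Hyperplanes

namespace SimpleGraph.Walk

variable {V : Type*} {G : SimpleGraph V} {x y : V}

def edgeHyp (w : G.Walk x y) (i : ℕ) : Set (Sym2 V) :=
  hypClass G s(w.getVert i, w.getVert (i + 1))

lemma isHyperplane_edgeHyp (w : G.Walk x y) {i : ℕ} (hi : i < w.length) :
    IsHyperplane G (w.edgeHyp i) :=
  ⟨_, G.mem_edgeSet.2 (w.adj_getVert_succ hi), rfl⟩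

def EdgeHypLT (w : G.Walk x y) (i j : Fin w.length) : Prop :=
  i < j ∧ ¬ Transverse G (w.edgeHyp i) (w.edgeHyp j)

end SimpleGraph.Walk

namespace QuasiMedian

open Walk

variable {V : Type*} {G : SimpleGraph V} {x y : V}

lemma connected (hG : QuasiMedian G) : G.Connected := hG.1

lemma noK4minus (hG : QuasiMedian G) : NoK4minus G := hG.2.1

lemma noK32 (hG : QuasiMedian G) : NoK32 G := hG.2.2.1

lemma triangle (hG : QuasiMedian G) : QMTriangle G := hG.2.2.2.1

lemma quadrangle (hG : QuasiMedian G) : QMQuad G := hG.2.2.2.2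

lemma eq_of_dist_eq_zero (hG : QuasiMedian G) {a b : V} (h : G.dist a b = 0) : a = b :=
  hG.connected.dist_eq_zero_iff.1 h

lemma isClique_edgeClique (hG : QuasiMedian G) {u v : V} (huv : G.Adj u v) :
    G.IsClique (G.edgeClique u v) := by
  rintro c (rfl | rfl | ⟨hc, hc'⟩) c' (rfl | rfl | ⟨hd, hd'⟩) hne
  · exact absurd rfl hne
  · exact huv
  · exact hd
  · exact huv.symm
  · exact absurd rfl hne
  · exact hd'
  · exact hc.symm
  · exact hc'.symm
  · by_contra hcc'
    exact hG.noK4minus ⟨_, _, _, _, huv.ne, hc.ne, hd.ne, hc'.ne, hd'.ne, hne,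
      huv, hc, hd, hc', hd', hcc'⟩

lemma mem_edgeClique_of_adj_of_adj (hG : QuasiMedian G) {u v c c' z : V} (huv : G.Adj u v)
    (hc : c ∈ G.edgeClique u v) (hc' : c' ∈ G.edgeClique u v) (hcc' : c ≠ c')
    (hcz : G.Adj c z) (hc'z : G.Adj c' z) : z ∈ G.edgeClique u v := by
  have hclique := hG.isClique_edgeClique huv
  have hadj : ∀ t ∈ G.edgeClique u v, t ≠ z → G.Adj t z := by
    intro t ht htz
    by_cases htc : t = c
    · exact htc ▸ hcz
    by_cases htc' : t = c'
    · exact htc' ▸ hc'z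
    by_contra htz'
    exact hG.noK4minus ⟨c, c', z, t, hcc', hcz.ne, Ne.symm htc, hc'z.ne, Ne.symm htc',
      Ne.symm htz, hclique hc hc' hcc', hcz, hclique hc ht (Ne.symm htc), hc'z,
      hclique hc' ht (Ne.symm htc'), fun h => htz' h.symm⟩
  by_cases hzu : z = u
  · exact .inl hzu
  by_cases hzv : z = v
  · exact .inr (.inl hzv)
  exact .inr (.inr ⟨hadj u (left_mem_edgeClique u v) (Ne.symm hzu),
    hadj v (right_mem_edgeClique u v) (Ne.symm hzv)⟩)

lemma exists_isGate (hG : QuasiMedian G) {u v : V} (huv : G.Adj u v) (w : V) :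
    ∃ c, G.IsGate u v w c := by
  obtain ⟨c₀, hc₀, hmin⟩ : ∃ c₀ ∈ G.edgeClique u v,
      ∀ c ∈ G.edgeClique u v, G.dist w c₀ ≤ G.dist w c := by
    obtain ⟨c₀, hc₀, hmin⟩ := (measure (G.dist w)).wf.has_min (G.edgeClique u v)
      ⟨u, left_mem_edgeClique u v⟩
    exact ⟨c₀, hc₀, fun c hc => not_lt.1 (hmin c hc)⟩
  have hclique := hG.isClique_edgeClique huv
  -- two closest vertices of the clique would have a common neighbour in the clique, closer to `w`
  have hunique : ∀ c ∈ G.edgeClique u v, c ≠ c₀ → G.dist w c ≠ G.dist w c₀ := by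
    intro c hc hne heq
    obtain ⟨z, hc₀z, hcz, hz⟩ := hG.triangle w c₀ c (hclique hc₀ hc hne.symm) heq.symm
    have := hmin z (hG.mem_edgeClique_of_adj_of_adj huv hc₀ hc hne.symm hc₀z hcz)
    omega
  refine ⟨c₀, hc₀, fun c hc hne => ?_⟩
  have := (hclique hc₀ hc hne.symm).dist_le_add_one w
  have := hmin c hc
  have := hunique c hc hne
  rw [dist_comm, dist_comm (u := c₀)]
  omega

lemma isGate_gate (hG : QuasiMedian G) {u v : V} (huv : G.Adj u v) (w : V) :
    G.IsGate u v w (G.gate u v w) := by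
  rw [gate, dif_pos (hG.exists_isGate huv w)]
  exact (hG.exists_isGate huv w).choose_spec

lemma gate_mem (hG : QuasiMedian G) {u v : V} (huv : G.Adj u v) (w : V) :
    G.gate u v w ∈ G.edgeClique u v :=
  (hG.isGate_gate huv w).1

lemma dist_eq_dist_gate_add_one (hG : QuasiMedian G) {u v c : V} (huv : G.Adj u v) (w : V)
    (hc : c ∈ G.edgeClique u v) (hne : c ≠ G.gate u v w) :
    G.dist c w = G.dist (G.gate u v w) w + 1 :=
  (hG.isGate_gate huv w).2 c hc hne

lemma dist_gate_le (hG : QuasiMedian G) {u v c : V} (huv : G.Adj u v) (w : V)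
    (hc : c ∈ G.edgeClique u v) : G.dist (G.gate u v w) w ≤ G.dist c w := by
  by_cases h : c = G.gate u v w
  · rw [h]
  · rw [hG.dist_eq_dist_gate_add_one huv w hc h]
    omega

lemma gate_eq_of_dist_eq_add_one (hG : QuasiMedian G) {u v c c' w : V} (huv : G.Adj u v)
    (hc : c ∈ G.edgeClique u v) (hc' : c' ∈ G.edgeClique u v)
    (h : G.dist c' w = G.dist c w + 1) : G.gate u v w = c := by
  by_contra hne
  have hc_dist := hG.dist_eq_dist_gate_add_one huv w hc (Ne.symm hne)
  by_cases hc'g : c' = G.gate u v w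
  · rw [hc'g] at h
    omega
  · have := hG.dist_eq_dist_gate_add_one huv w hc' hc'g
    omega

lemma gate_eq_self (hG : QuasiMedian G) {u v c : V} (huv : G.Adj u v)
    (hc : c ∈ G.edgeClique u v) : G.gate u v c = c :=
  hG.eq_of_dist_eq_zero (Nat.le_zero.1 (dist_self (G := G) ▸ hG.dist_gate_le huv c hc))

lemma dist_gate_eq_of_adj (hG : QuasiMedian G) {u v a b : V} (huv : G.Adj u v)
    (hab : G.Adj a b) (hg : G.gate u v a ≠ G.gate u v b) :
    G.dist (G.gate u v a) a = G.dist (G.gate u v b) b := by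
  have := hG.dist_eq_dist_gate_add_one huv a (hG.gate_mem huv b) (Ne.symm hg)
  have := hG.dist_eq_dist_gate_add_one huv b (hG.gate_mem huv a) hg
  have := hab.symm.dist_le_add_one (G.gate u v b)
  have := hab.dist_le_add_one (G.gate u v a)
  omega

lemma gate_eq_of_adj_of_dist_lt (hG : QuasiMedian G) {u v a z : V} (huv : G.Adj u v)
    (hza : G.Adj z a) (hlt : G.dist (G.gate u v a) z < G.dist (G.gate u v a) a) :
    G.gate u v z = G.gate u v a := by
  by_contra h
  have := hG.dist_gate_eq_of_adj huv hza h
  have := hG.dist_gate_le huv z (hG.gate_mem huv a)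
  omega

lemma gate_ne_of_triangle (hG : QuasiMedian G) {u v a b c : V} (huv : G.Adj u v)
    (hab : G.Adj a b) (hbc : G.Adj b c) (hac : G.Adj a c)
    (hgab : G.gate u v a ≠ G.gate u v b) : G.gate u v c ≠ G.gate u v a := by
  intro hgca
  have hka := hG.dist_gate_eq_of_adj huv hab hgab
  have hkc := hG.dist_gate_eq_of_adj huv hbc (hgca ▸ hgab.symm)
  rw [hgca] at hkc
  -- the triangle condition towards the gate of `a` gives `z` such that `a, c, z, b` span an
  -- induced `K₄⁻`
  obtain ⟨z, haz, hcz, hz⟩ := hG.triangle _ a c hac (hka.trans hkc)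
  have hgz : G.gate u v z = G.gate u v a := hG.gate_eq_of_adj_of_dist_lt huv haz.symm (by omega)
  have hzb : ¬ G.Adj z b := fun hzb => by
    have := hG.dist_gate_eq_of_adj huv hzb (hgz ▸ hgab)
    rw [hgz] at this
    omega
  have hzb' : z ≠ b := fun h => hgab (h ▸ hgz).symm
  exact hG.noK4minus ⟨a, c, z, b, hac.ne, haz.ne, hab.ne, hcz.ne, hbc.ne.symm, hzb',
    hac, haz, hab, hcz, hbc.symm, hzb⟩

lemma gate_eq_of_adj_of_adj (hG : QuasiMedian G) {u v p q b : V} (huv : G.Adj u v)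
    (hpb : G.Adj p b) (hqb : G.Adj q b) (hpq : p ≠ q)
    (hgpq : G.gate u v p = G.gate u v q) : G.gate u v b = G.gate u v p := by
  by_contra hgb
  by_cases hadj : G.Adj p q
  · exact hG.gate_ne_of_triangle huv hpb hqb.symm hadj (Ne.symm hgb) hgpq.symm
  have hp := hG.dist_gate_eq_of_adj huv hpb (Ne.symm hgb)
  have hq := hG.dist_gate_eq_of_adj huv hqb (hgpq ▸ Ne.symm hgb)
  rw [← hgpq] at hq
  have hbA := hG.dist_eq_dist_gate_add_one huv b (hG.gate_mem huv p) (Ne.symm hgb)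
  have hpB := hG.dist_eq_dist_gate_add_one huv p (hG.gate_mem huv b) hgb
  -- the quadrangle condition towards the gates of `p` and of `b` gives `w` and then `z` such
  -- that `p, q, z` and `w, b` span an induced `K_{3,2}`
  obtain ⟨w, hpw, hqw, hw⟩ :=
    hG.quadrangle _ p q b hpb hqb hpq (hp.trans hq.symm) (by omega)
  have hgw : G.gate u v w = G.gate u v p :=
    hG.gate_eq_of_adj_of_dist_lt huv hpw.symm (by omega)
  have hwb : ¬ G.Adj w b := fun hwb =>
    hG.gate_ne_of_triangle huv hwb hpb.symm hpw.symm (hgw ▸ Ne.symm hgb) hgw.symm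
  have hwb' : w ≠ b := fun h => hgb (h ▸ hgw)
  have hwB := hG.dist_eq_dist_gate_add_one huv w (hG.gate_mem huv b) (hgw ▸ hgb)
  rw [hgw] at hwB
  obtain ⟨z, hbz, hwz, hz⟩ :=
    hG.quadrangle (G.gate u v b) b w p hpb.symm hpw.symm (Ne.symm hwb') (by omega) (by omega)
  have hgz : G.gate u v z = G.gate u v b :=
    hG.gate_eq_of_adj_of_dist_lt huv hbz.symm (by omega)
  have hzw : G.gate u v w ≠ G.gate u v z := by rw [hgz, hgw]; exact Ne.symm hgb
  have hzp : ¬ G.Adj z p := fun hzp =>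
    hG.gate_ne_of_triangle huv hwz hzp hpw.symm hzw hgw.symm
  have hzq : ¬ G.Adj z q := fun hzq =>
    hG.gate_ne_of_triangle huv hwz hzq hqw.symm hzw (hgw.trans hgpq).symm
  refine hG.noK32 ⟨p, q, z, w, b, hpq, fun h => hgb (h ▸ hgz).symm,
    fun h => hgb (hgpq ▸ h ▸ hgz).symm, hwb', hpw, hpb, hqw, hqb, hwz.symm, hbz.symm,
    hadj, fun h => hzp h.symm, fun h => hzq h.symm, hwb⟩

lemma gate_ne_of_square (hG : QuasiMedian G) {u v a b c d : V} (huv : G.Adj u v)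
    (hab : G.Adj a b) (hbc : G.Adj b c) (hcd : G.Adj c d) (hda : G.Adj d a)
    (hac : a ≠ c) (hbd : b ≠ d) (hgab : G.gate u v a ≠ G.gate u v b) :
    G.gate u v c ≠ G.gate u v d := by
  intro hgcd
  have hca : G.gate u v c ≠ G.gate u v a := fun h =>
    hgab (hG.gate_eq_of_adj_of_adj huv hab hbc.symm hac h.symm).symm
  have hcb : G.gate u v c ≠ G.gate u v b := fun h =>
    hgab (hG.gate_eq_of_adj_of_adj huv hab.symm hda hbd (h.symm.trans hgcd))
  have hk := hG.dist_gate_eq_of_adj huv hab hgab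
  have hkc := hG.dist_gate_eq_of_adj huv hbc (Ne.symm hcb)
  have haC := hG.dist_eq_dist_gate_add_one huv a (hG.gate_mem huv c) hca
  have hbC := hG.dist_eq_dist_gate_add_one huv b (hG.gate_mem huv c) hcb
  obtain ⟨z, haz, hbz, hz⟩ := hG.triangle (G.gate u v c) a b hab (by omega)
  have hgz : G.gate u v z = G.gate u v c := by
    by_contra hne
    have hz' : G.dist (G.gate u v z) z = G.dist (G.gate u v c) c := by
      by_cases hza : G.gate u v z = G.gate u v a
      · have := hG.dist_gate_eq_of_adj huv hbz.symm (hza ▸ hgab)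
        omega
      · have := hG.dist_gate_eq_of_adj huv haz.symm hza
        omega
    have := hG.dist_eq_dist_gate_add_one huv z (hG.gate_mem huv c) (Ne.symm hne)
    omega
  by_cases hzc : z = c
  · rw [hzc] at haz
    exact hG.gate_ne_of_triangle huv haz.symm hda.symm hcd hca hgcd.symm
  · exact hcb (hgz.symm.trans (hG.gate_eq_of_adj_of_adj huv hbz.symm hbc.symm hzc hgz).symm)

/-- Edges in Djoković–Winkler relation with `u v` lie in its hyperplane: squares supplied by the
quadrangle condition move `a b` one step towards `u v`. -/
lemma mem_hypClass_of_dist (hG : QuasiMedian G) {u v : V} (huv : G.Adj u v) (k : ℕ) {a b : V}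
    (hab : G.Adj a b) (hua : G.dist u a = k) (hvb : G.dist v b = k)
    (hva : G.dist v a = k + 1) (hub : G.dist u b = k + 1) :
    s(a, b) ∈ hypClass G s(u, v) := by
  induction k generalizing a b with
  | zero =>
    rw [← hG.eq_of_dist_eq_zero hua, ← hG.eq_of_dist_eq_zero hvb]
    exact mem_hypClass_self _
  | succ n ih =>
    obtain ⟨a', haa', ha'⟩ :=
      hG.connected.exists_adj_dist_add_one_eq (by omega : 0 < G.dist u a)
    have hva' : G.dist v a' = n + 1 := by
      have := huv.dist_le_add_one' a'
      have := haa'.symm.dist_le_add_one v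
      omega
    have ha'b : a' ≠ b := fun h => by rw [h] at ha'; omega
    -- `a' w b a` is such a square
    obtain ⟨w, ha'w, hbw, hw⟩ := hG.quadrangle v a' b a haa'.symm hab.symm ha'b
      (hva'.trans hvb.symm) (by omega)
    have huw : G.dist u w = n + 1 := by
      have := ha'w.dist_le_add_one u
      have := hbw.symm.dist_le_add_one u
      omega
    refine mem_hypClass_of_hypStep (ih ha'w (by omega) (by omega) hva' huw)
      (.inr ⟨a', w, b, a, ha'w, hbw.symm, hab.symm, haa', ha'b, ?_, rfl, rfl⟩)
    rintro rfl
    omega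

lemma mem_hypClass_of_mem_edgeClique (hG : QuasiMedian G) {u v a b : V} (huv : G.Adj u v)
    (ha : a ∈ G.edgeClique u v) (hb : b ∈ G.edgeClique u v) (hab : a ≠ b) :
    s(a, b) ∈ hypClass G s(u, v) := by
  have hclique := hG.isClique_edgeClique huv
  have hu : ∀ c ∈ G.edgeClique u v, c ≠ u → s(u, c) ∈ hypClass G s(u, v) := by
    rintro c (rfl | rfl | ⟨huc, hvc⟩) hcu
    · exact absurd rfl hcu
    · exact mem_hypClass_self _
    · exact mem_hypClass_of_hypStep (mem_hypClass_self _)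
        (.inl ⟨u, v, c, huv, hvc, huc, by simp, by simp⟩)
  by_cases hau : a = u
  · rw [hau]
    exact hu b hb (hau ▸ Ne.symm hab)
  by_cases hbu : b = u
  · rw [hbu, Sym2.eq_swap (a := a)]
    exact hu a ha hau
  exact mem_hypClass_of_hypStep (hu a ha hau)
    (.inl ⟨u, a, b, hclique (left_mem_edgeClique u v) ha (Ne.symm hau), hclique ha hb hab,
      hclique (left_mem_edgeClique u v) hb (Ne.symm hbu), by simp, by simp⟩)

lemma mem_hypClass_of_gate_ne (hG : QuasiMedian G) {u v a b : V} (huv : G.Adj u v)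
    (hab : G.Adj a b) (hg : G.gate u v a ≠ G.gate u v b) :
    s(a, b) ∈ hypClass G s(u, v) := by
  have ha := hG.dist_eq_dist_gate_add_one huv a (hG.gate_mem huv b) (Ne.symm hg)
  have hb := hG.dist_eq_dist_gate_add_one huv b (hG.gate_mem huv a) hg
  have hk := hG.dist_gate_eq_of_adj huv hab hg
  have hgates := hG.mem_hypClass_of_mem_edgeClique huv (hG.gate_mem huv a) (hG.gate_mem huv b) hg
  rw [← hypClass_eq_of_mem hgates]
  exact hG.mem_hypClass_of_dist
    (hG.isClique_edgeClique huv (hG.gate_mem huv a) (hG.gate_mem huv b) hg) _ hab rfl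
    hk.symm ha (by omega)

lemma gates_ne_of_triangle (hG : QuasiMedian G) {u v a b c : V} (huv : G.Adj u v)
    (hab : G.Adj a b) (hbc : G.Adj b c) (hac : G.Adj a c)
    (hgab : G.gate u v a ≠ G.gate u v b) :
    G.gate u v b ≠ G.gate u v c ∧ G.gate u v a ≠ G.gate u v c :=
  ⟨fun h => hG.gate_ne_of_triangle huv hab.symm hac hbc (Ne.symm hgab) h.symm,
    fun h => hG.gate_ne_of_triangle huv hab hbc hac hgab h.symm⟩

lemma adj_and_gate_ne_of_mem_hypClass (hG : QuasiMedian G) {u v a b : V} (huv : G.Adj u v)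
    (h : s(a, b) ∈ hypClass G s(u, v)) : G.Adj a b ∧ G.gate u v a ≠ G.gate u v b := by
  have hswap : ∀ {a b x y : V}, s(a, b) = s(x, y) →
      G.Adj a b ∧ G.gate u v a ≠ G.gate u v b → G.Adj x y ∧ G.gate u v x ≠ G.gate u v y := by
    intro a b x y h hab
    rcases Sym2.eq_iff.1 h with ⟨rfl, rfl⟩ | ⟨rfl, rfl⟩
    exacts [hab, ⟨hab.1.symm, Ne.symm hab.2⟩]
  suffices ∀ e ∈ hypClass G s(u, v),
      ∃ x y, e = s(x, y) ∧ G.Adj x y ∧ G.gate u v x ≠ G.gate u v y by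
    obtain ⟨x, y, hxy, hcross⟩ := this _ h
    exact hswap hxy.symm hcross
  intro e he
  induction he with
  | refl =>
    refine ⟨u, v, rfl, huv, ?_⟩
    rw [hG.gate_eq_self huv (left_mem_edgeClique u v),
      hG.gate_eq_self huv (right_mem_edgeClique u v)]
    exact huv.ne
  | tail _ hstep ih =>
    obtain ⟨x, y, rfl, hcross⟩ := ih
    rcases hstep with ⟨a, b, c, hab, hbc, hac, he, he'⟩ |
      ⟨a, b, c, d, hab, hbc, hcd, hda, hac, hbd, he, rfl⟩
    · have hall : G.gate u v a ≠ G.gate u v b ∧ G.gate u v b ≠ G.gate u v c ∧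
          G.gate u v a ≠ G.gate u v c := by
        simp only [Set.mem_insert_iff, Set.mem_singleton_iff] at he
        rcases he with he | he | he
        · have h := (hswap he hcross).2
          exact ⟨h, hG.gates_ne_of_triangle huv hab hbc hac h⟩
        · have h := (hswap he hcross).2
          have := hG.gates_ne_of_triangle huv hbc hac.symm hab.symm h
          exact ⟨Ne.symm this.2, h, Ne.symm this.1⟩
        · have h := (hswap he hcross).2
          have := hG.gates_ne_of_triangle huv hac hbc.symm hab h
          exact ⟨this.2, Ne.symm this.1, h⟩
      simp only [Set.mem_insert_iff, Set.mem_singleton_iff] at he'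
      rcases he' with rfl | rfl | rfl
      exacts [⟨a, b, rfl, hab, hall.1⟩, ⟨b, c, rfl, hbc, hall.2.1⟩, ⟨a, c, rfl, hac, hall.2.2⟩]
    · exact ⟨d, c, rfl, hcd.symm, Ne.symm
        (hG.gate_ne_of_square huv hab hbc hcd hda hac hbd (hswap he hcross).2)⟩

lemma mem_hypClass_iff (hG : QuasiMedian G) {u v a b : V} (huv : G.Adj u v) :
    s(a, b) ∈ hypClass G s(u, v) ↔ G.Adj a b ∧ G.gate u v a ≠ G.gate u v b :=
  ⟨hG.adj_and_gate_ne_of_mem_hypClass huv, fun h => hG.mem_hypClass_of_gate_ne huv h.1 h.2⟩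

lemma gate_eq_of_mem_hypClass_of_ne (hG : QuasiMedian G) {u v u' v' a b : V}
    (hu'v' : G.Adj u' v') (hne : hypClass G s(u, v) ≠ hypClass G s(u', v'))
    (hab : G.Adj a b) (h : s(a, b) ∈ hypClass G s(u, v)) :
    G.gate u' v' a = G.gate u' v' b := by
  by_contra hg
  exact hne (hypClass_eq_of_mem_of_mem h (hG.mem_hypClass_of_gate_ne hu'v' hab hg))

/-- If `¬ Transverse J K`, no edge of the carrier of `J` changes the gate for `K`, and the
carrier of `J` is connected, so the gate for `K` is constant on it. -/
lemma gate_eq_of_not_transverse (hG : QuasiMedian G) {u v u' v' : V} (huv : G.Adj u v)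
    (hu'v' : G.Adj u' v') (hT : ¬ Transverse G (hypClass G s(u, v)) (hypClass G s(u', v')))
    (hne : hypClass G s(u, v) ≠ hypClass G s(u', v')) {z : V}
    (hz : z ∈ hypVerts (hypClass G s(u, v))) : G.gate u' v' z = G.gate u' v' u := by
  set J := hypClass G s(u, v)
  have hcarrier : ∀ {s t}, G.Adj s t → s ∈ hypVerts J → t ∈ hypVerts J →
      G.gate u' v' s = G.gate u' v' t := fun hst hs ht => by
    by_contra hg
    exact hT ⟨hne, _, _, hst, hG.mem_hypClass_of_gate_ne hu'v' hst hg, hs, ht⟩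
  have hverts : ∀ {e a}, e ∈ J → a ∈ e → a ∈ hypVerts J := fun he ha => ⟨_, he, ha⟩
  obtain ⟨e, he, hze⟩ := hz
  induction he generalizing z with
  | refl =>
    rcases Sym2.mem_iff.1 hze with rfl | rfl
    · rfl
    · exact hcarrier huv.symm (hverts (mem_hypClass_self _) (Sym2.mem_mk_right _ _))
        (hverts (mem_hypClass_self _) (Sym2.mem_mk_left _ _))
  | tail he₁ hstep ih =>
    have he₂ := mem_hypClass_of_hypStep he₁ hstep
    rcases hstep with ⟨a, b, c, hab, hbc, hac, he, he'⟩ |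
      ⟨a, b, c, d, hab, hbc, hcd, hda, -, -, rfl, rfl⟩
    · have hmem : ∀ f ∈ ({s(a, b), s(b, c), s(a, c)} : Set (Sym2 V)), f ∈ J :=
        fun f hf => mem_hypClass_of_hypStep he₁ (.inl ⟨a, b, c, hab, hbc, hac, he, hf⟩)
      have ha := hverts (hmem _ (by simp)) (Sym2.mem_mk_left a b)
      have hb := hverts (hmem _ (by simp)) (Sym2.mem_mk_right a b)
      have hc := hverts (hmem _ (by simp)) (Sym2.mem_mk_right b c)
      have hgab := hcarrier hab ha hb
      have hgbc := hcarrier hbc hb hc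
      have hgb : G.gate u' v' b = G.gate u' v' u := by
        simp only [Set.mem_insert_iff, Set.mem_singleton_iff] at he
        rcases he with rfl | rfl | rfl
        exacts [hgab.symm.trans (ih (Sym2.mem_mk_left a b)), ih (Sym2.mem_mk_left b c),
          hgab.symm.trans (ih (Sym2.mem_mk_left a c))]
      have hz : z = a ∨ z = b ∨ z = c := by
        simp only [Set.mem_insert_iff, Set.mem_singleton_iff] at he'
        rcases he' with rfl | rfl | rfl <;> rcases Sym2.mem_iff.1 hze with rfl | rfl <;> simp
      rcases hz with rfl | rfl | rfl
      exacts [hgab.trans hgb, hgb, hgbc.symm.trans hgb]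
    · rcases Sym2.mem_iff.1 hze with rfl | rfl
      · exact (hcarrier hda (hverts he₂ (Sym2.mem_mk_left _ _))
          (hverts he₁ (Sym2.mem_mk_left _ _))).trans (ih (Sym2.mem_mk_left _ _))
      · exact (hcarrier hbc.symm (hverts he₂ (Sym2.mem_mk_right _ _))
          (hverts he₁ (Sym2.mem_mk_right _ _))).trans (ih (Sym2.mem_mk_right _ _))

/-- Given edges `p q` of `K` and `p p'` of `J` with `q` closer than `p` to the `J`-gate of `p`,
the quadrangle condition completes them to a square `p q w p'`, whose side `p' w` lies in `K`. -/
lemma mem_hypVerts_of_square (hG : QuasiMedian G) {u v u' v' p q p' : V} (huv : G.Adj u v)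
    (hu'v' : G.Adj u' v') (hne : hypClass G s(u, v) ≠ hypClass G s(u', v'))
    (hpq : s(p, q) ∈ hypClass G s(u', v')) (hpp' : s(p, p') ∈ hypClass G s(u, v))
    (hq : G.dist (G.gate u v p) q + 1 = G.dist (G.gate u v p) p) :
    p' ∈ hypVerts (hypClass G s(u', v')) := by
  obtain ⟨hpq_adj, hgK_pq⟩ := (hG.mem_hypClass_iff hu'v').1 hpq
  obtain ⟨hpp'_adj, hgJ_pp'⟩ := (hG.mem_hypClass_iff huv).1 hpp'
  have hgJ_pq := hG.gate_eq_of_mem_hypClass_of_ne huv hne.symm hpq_adj hpq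
  have hgK_pp' := hG.gate_eq_of_mem_hypClass_of_ne hu'v' hne hpp'_adj hpp'
  have hL := hG.dist_gate_eq_of_adj huv hpp'_adj hgJ_pp'
  have hqB := hG.dist_eq_dist_gate_add_one huv q (hG.gate_mem huv p') (hgJ_pq ▸ Ne.symm hgJ_pp')
  have hpB := hG.dist_eq_dist_gate_add_one huv p (hG.gate_mem huv p') (Ne.symm hgJ_pp')
  rw [← hgJ_pq] at hqB
  have hp'q : p' ≠ q := fun h => hgK_pq (hgK_pp'.trans (congrArg _ h))
  obtain ⟨w, hp'w, hqw, hw⟩ := hG.quadrangle (G.gate u v p') p' q p hpp'_adj.symm hpq_adj.symm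
    hp'q (by omega) (by omega)
  have hgw : G.gate u v w = G.gate u v p' :=
    hG.gate_eq_of_adj_of_dist_lt huv hp'w.symm (by omega)
  have hqw_J : s(q, w) ∈ hypClass G s(u, v) :=
    hG.mem_hypClass_of_gate_ne huv hqw (by rw [hgw, ← hgJ_pq]; exact hgJ_pp')
  have hgK_qw := hG.gate_eq_of_mem_hypClass_of_ne hu'v' hne hqw hqw_J
  exact ⟨_, hG.mem_hypClass_of_gate_ne hu'v' hp'w (by rw [← hgK_pp', ← hgK_qw]; exact hgK_pq),
    Sym2.mem_mk_left _ _⟩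

lemma transverse_symm (hG : QuasiMedian G) {J K : Set (Sym2 V)} (hJ : IsHyperplane G J)
    (hK : IsHyperplane G K) (hT : Transverse G J K) : Transverse G K J := by
  obtain ⟨e, he, rfl⟩ := hJ
  obtain ⟨e', he', rfl⟩ := hK
  induction e using Sym2.ind with | _ u v => ?_
  induction e' using Sym2.ind with | _ u' v' => ?_
  rw [SimpleGraph.mem_edgeSet] at he he'
  obtain ⟨hne, p, q, hpq, hpqK, hp, hq⟩ := hT
  have hgate : G.gate u v p = G.gate u v q := hG.gate_eq_of_mem_hypClass_of_ne he hne.symm hpq hpqK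
  suffices ∃ a a', s(a, a') ∈ hypClass G s(u, v) ∧ a ∈ hypVerts (hypClass G s(u', v')) ∧
      a' ∈ hypVerts (hypClass G s(u', v')) by
    obtain ⟨a, a', haa', ha, ha'⟩ := this
    exact ⟨hne.symm, a, a', ((hG.mem_hypClass_iff he).1 haa').1, haa', ha, ha'⟩
  have hexists : ∀ {a}, a ∈ hypVerts (hypClass G s(u, v)) →
      ∃ a', s(a, a') ∈ hypClass G s(u, v) := fun ⟨f, hf, haf⟩ => by
    obtain ⟨a', rfl⟩ := Sym2.mem_iff_exists.1 haf
    exact ⟨a', hf⟩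
  have hpK : p ∈ hypVerts (hypClass G s(u', v')) := ⟨_, hpqK, Sym2.mem_mk_left _ _⟩
  have hqK : q ∈ hypVerts (hypClass G s(u', v')) := ⟨_, hpqK, Sym2.mem_mk_right _ _⟩
  obtain ⟨p', hpp'⟩ := hexists hp
  obtain ⟨q', hqq'⟩ := hexists hq
  have hd := hpq.dist_le_add_one (G.gate u v p)
  have hd' := hpq.symm.dist_le_add_one (G.gate u v p)
  rcases lt_trichotomy (G.dist (G.gate u v p) q) (G.dist (G.gate u v p) p) with hlt | heq | hgt
  · exact ⟨p, p', hpp', hpK, hG.mem_hypVerts_of_square he he' hne hpqK hpp' (by omega)⟩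
  · obtain ⟨z, hpz, hqz, hz⟩ := hG.triangle _ p q hpq heq.symm
    have hpzK : s(p, z) ∈ hypClass G s(u', v') :=
      mem_hypClass_of_hypStep hpqK (.inl ⟨p, q, z, hpq, hqz, hpz, by simp, by simp⟩)
    exact ⟨p, p', hpp', hpK, hG.mem_hypVerts_of_square he he' hne hpzK hpp' (by omega)⟩
  · rw [Sym2.eq_swap (a := p)] at hpqK
    exact ⟨q, q', hqq', hqK,
      hG.mem_hypVerts_of_square he he' hne hpqK hqq' (by rw [← hgate]; omega)⟩

lemma separates_of_gate_ne (hG : QuasiMedian G) {u v a b : V} (huv : G.Adj u v)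
    (hg : G.gate u v a ≠ G.gate u v b) : Separates G (hypClass G s(u, v)) a b := by
  intro p
  contrapose! hg
  induction p with
  | nil => rfl
  | cons hab p ih =>
    simp only [Walk.edges_cons, List.mem_cons, forall_eq_or_imp] at hg
    exact (not_not.1 fun h => hg.1 (hG.mem_hypClass_of_gate_ne huv hab h)).trans (ih hg.2)

lemma gate_getVert_of_le (hG : QuasiMedian G) {w : G.Walk x y} (hw : w.length = G.dist x y)
    {i l : ℕ} (hi : i < w.length) (hl : l ≤ i) :
    G.gate (w.getVert i) (w.getVert (i + 1)) (w.getVert l) = w.getVert i := by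
  refine hG.gate_eq_of_dist_eq_add_one (w.adj_getVert_succ hi) (left_mem_edgeClique _ _)
    (right_mem_edgeClique _ _) ?_
  rw [dist_comm, dist_getVert_getVert hw (by omega) hi, dist_comm,
    dist_getVert_getVert hw hl hi.le]
  omega

lemma gate_getVert_of_lt (hG : QuasiMedian G) {w : G.Walk x y} (hw : w.length = G.dist x y)
    {i l : ℕ} (hil : i < l) (hl : l ≤ w.length) :
    G.gate (w.getVert i) (w.getVert (i + 1)) (w.getVert l) = w.getVert (i + 1) := by
  refine hG.gate_eq_of_dist_eq_add_one (w.adj_getVert_succ (by omega))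
    (right_mem_edgeClique _ _) (left_mem_edgeClique _ _) ?_
  rw [dist_getVert_getVert hw (by omega) hl, dist_getVert_getVert hw hil hl]
  omega

lemma separates_edgeHyp (hG : QuasiMedian G) {w : G.Walk x y} (hw : w.length = G.dist x y)
    {i : ℕ} (hi : i < w.length) : Separates G (w.edgeHyp i) x y := by
  refine hG.separates_of_gate_ne (w.adj_getVert_succ hi) ?_
  have hx := hG.gate_getVert_of_le hw hi (Nat.zero_le i)
  have hy := hG.gate_getVert_of_lt hw hi le_rfl
  rw [getVert_zero] at hx
  rw [getVert_length] at hy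
  rw [hx, hy]
  exact (w.adj_getVert_succ hi).ne

lemma edgeHyp_ne (hG : QuasiMedian G) {w : G.Walk x y} (hw : w.length = G.dist x y)
    {i j : ℕ} (hij : i < j) (hj : j < w.length) : w.edgeHyp i ≠ w.edgeHyp j := by
  intro h
  have hmem : s(w.getVert j, w.getVert (j + 1)) ∈ w.edgeHyp i := h ▸ mem_hypClass_self _
  have := ((hG.mem_hypClass_iff (w.adj_getVert_succ (hij.trans hj))).1 hmem).2
  rw [hG.gate_getVert_of_lt hw hij hj.le, hG.gate_getVert_of_lt hw (by omega) hj] at this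
  exact this rfl

lemma edgeHyp_injective (hG : QuasiMedian G) {w : G.Walk x y} (hw : w.length = G.dist x y) :
    Function.Injective fun i : Fin w.length => w.edgeHyp i := by
  intro i j h
  by_contra hne
  rcases Fin.lt_or_lt_of_ne hne with hij | hji
  exacts [hG.edgeHyp_ne hw hij j.2 h, hG.edgeHyp_ne hw hji i.2 h.symm]

/-- If the hyperplanes of edges `i` and `k` were transverse, a common vertex of their carriers
would have, by `gate_eq_of_not_transverse`, the same gate for the hyperplane of edge `j` as both
`w i` and `w (k + 1)`, which lie on different sides of it. -/
lemma not_transverse_edgeHyp_trans (hG : QuasiMedian G) {w : G.Walk x y}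
    (hw : w.length = G.dist x y) {i j k : ℕ} (hij : i < j) (hjk : j < k) (hk : k < w.length)
    (h₁ : ¬ Transverse G (w.edgeHyp i) (w.edgeHyp j))
    (h₂ : ¬ Transverse G (w.edgeHyp j) (w.edgeHyp k)) :
    ¬ Transverse G (w.edgeHyp i) (w.edgeHyp k) := by
  rintro ⟨-, a, b, -, hab, ha, -⟩
  have hj := w.adj_getVert_succ (hjk.trans hk)
  have h₂' : ¬ Transverse G (w.edgeHyp k) (w.edgeHyp j) := fun h =>
    h₂ (hG.transverse_symm (w.isHyperplane_edgeHyp hk)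
      (w.isHyperplane_edgeHyp (hjk.trans hk)) h)
  have hi := hG.gate_eq_of_not_transverse (w.adj_getVert_succ (by omega)) hj h₁
    (hG.edgeHyp_ne hw hij (hjk.trans hk)) ha
  have hk' := hG.gate_eq_of_not_transverse (w.adj_getVert_succ hk) hj h₂'
    (hG.edgeHyp_ne hw hjk hk).symm ⟨_, hab, Sym2.mem_mk_left _ _⟩
  rw [hG.gate_getVert_of_le hw (hjk.trans hk) hij.le] at hi
  rw [hG.gate_getVert_of_lt hw hjk hk.le] at hk'
  exact hj.ne (hi.symm.trans hk')

lemma isStrictOrder_edgeHypLT (hG : QuasiMedian G) {w : G.Walk x y}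
    (hw : w.length = G.dist x y) : IsStrictOrder (Fin w.length) w.EdgeHypLT where
  irrefl _ h := h.1.false
  trans _ _ k hij hjk :=
    ⟨hij.1.trans hjk.1, hG.not_transverse_edgeHyp_trans hw hij.1 hjk.1 k.2 hij.2 hjk.2⟩

lemma not_transverse_of_isChain (hG : QuasiMedian G) {w : G.Walk x y}
    {t : Set (Fin w.length)} (ht : IsChain w.EdgeHypLT t) {i j : Fin w.length} (hi : i ∈ t)
    (hj : j ∈ t) (hne : w.edgeHyp i ≠ w.edgeHyp j) :
    ¬ Transverse G (w.edgeHyp i) (w.edgeHyp j) := by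
  rcases ht hi hj (ne_of_apply_ne (fun k : Fin w.length => w.edgeHyp k) hne) with h | h
  · exact h.2
  · exact fun hT => h.2 <|
      hG.transverse_symm (w.isHyperplane_edgeHyp i.2) (w.isHyperplane_edgeHyp j.2) hT

lemma transverse_of_isAntichain (hG : QuasiMedian G) {w : G.Walk x y}
    {t : Set (Fin w.length)} (ht : IsAntichain w.EdgeHypLT t) {i j : Fin w.length} (hi : i ∈ t)
    (hj : j ∈ t) (hne : w.edgeHyp i ≠ w.edgeHyp j) :
    Transverse G (w.edgeHyp i) (w.edgeHyp j) := by
  have hij : i ≠ j := ne_of_apply_ne (fun k : Fin w.length => w.edgeHyp k) hne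
  rcases lt_or_gt_of_ne hij with h | h
  · exact not_not.1 fun hT => ht hi hj hij ⟨h, hT⟩
  · exact hG.transverse_symm (w.isHyperplane_edgeHyp j.2) (w.isHyperplane_edgeHyp i.2)
      (not_not.1 fun hT => ht hj hi hij.symm ⟨h, hT⟩)

end QuasiMedian

open Finset in
/-- In a quasi-median graph of cubical dimension at most `D` (every family of pairwise
transverse hyperplanes has at most `D` members), if every family of pairwise
non-transverse hyperplanes separating `x` and `y` has at most `N` members, then
`d(x,y) ≤ D * N`. -/
theorem stmt9 {V : Type*} (G : SimpleGraph V) (hG : QuasiMedian G) (x y : V)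
    (D N : ℕ)
    (hD : ∀ S : Finset (Set (Sym2 V)), (∀ J ∈ S, IsHyperplane G J) →
      (∀ J ∈ S, ∀ J' ∈ S, J ≠ J' → Transverse G J J') → S.card ≤ D)
    (hN : ∀ S : Finset (Set (Sym2 V)),
      (∀ J ∈ S, IsHyperplane G J ∧ Separates G J x y) →
      (∀ J ∈ S, ∀ J' ∈ S, J ≠ J' → ¬ Transverse G J J') → S.card ≤ N) :
    G.dist x y ≤ D * N := by
  classical
  obtain ⟨w, hw⟩ := hG.connected.exists_walk_length_eq_dist x y
  have := hG.isStrictOrder_edgeHypLT hw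
  have hcard (t : Finset (Fin w.length)) : #(t.image fun i : Fin w.length => w.edgeHyp i) = #t :=
    card_image_of_injective t (hG.edgeHyp_injective hw)
  rw [← hw, ← Fintype.card_fin w.length, ← card_univ]
  refine card_le_mul_of_isChain_of_isAntichain (r := w.EdgeHypLT) (fun t _ ht => ?_)
    (fun t _ ht => ?_) <;> rw [← hcard]
  · refine hN _ (forall_mem_image.2 fun i _ =>
      ⟨w.isHyperplane_edgeHyp i.2, hG.separates_edgeHyp hw i.2⟩) ?_
    simp only [forall_mem_image]
    exact fun i hi j hj => hG.not_transverse_of_isChain ht hi hj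
  · refine hD _ (forall_mem_image.2 fun i _ => w.isHyperplane_edgeHyp i.2) ?_
    simp only [forall_mem_image]
    exact fun i hi j hj => hG.transverse_of_isAntichain ht hi hj
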